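/- arXiv:2004.04407 — 3 statements merged into one kernel-verified Lean document; each statement's English description precedes it below -/
import Mathlib

section
/- If a norm N on a finite-dimensional real vector space E takes integer values on every point of a full-rank lattice Λ ⊆ E, then the dual unit ball B* = {u ∈ E* : ∀ a ∈ E, ⟨u,a⟩ ≤ N(a)} is the convex hull of finitely many linear functionals that take integer values on Λ. -/
/-!
The derivative at infinity `x ↦ inf_{t ≥ 0} (h (t • a + x) - t * h a)` of a sublinear function `h`
in a lattice direction `a` is again sublinear, lies below `h`, is linear along `a`, and is still
integral on the lattice: along the integers the slope is an antitone, bounded below sequence of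
integers, so the infimum is attained. Taking it first in the direction of a lattice point `x₀` and
then along a basis turns `N` into an integral linear functional `u ≤ N` with `u x₀ = N x₀`.
Hence the support function of the finitely many integral functionals of the dual ball agrees with
`N` on the lattice, and so everywhere, since both are sublinear and every point is a bounded
distance from a lattice point after scaling. Separation then identifies their convex hull with the
dual ball.
-/

open Set

section

variable {E : Type*} [AddCommGroup E] [Module ℝ E]

structure IsSublinear (h : E → ℝ) : Prop where
  add_le : ∀ x y, h (x + y) ≤ h x + h y
  smul_of_nonneg : ∀ r : ℝ, 0 ≤ r → ∀ x, h (r • x) = r * h x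

namespace IsSublinear

variable {h : E → ℝ}

theorem map_zero (hh : IsSublinear h) : h 0 = 0 := by
  simpa using hh.smul_of_nonneg 0 le_rfl 0

theorem add_neg_nonneg (hh : IsSublinear h) (x : E) : 0 ≤ h x + h (-x) := by
  simpa [hh.map_zero] using hh.add_le x (-x)

theorem mul_le_map_smul (hh : IsSublinear h) (r : ℝ) (x : E) : r * h x ≤ h (r • x) := by
  rcases le_total 0 r with hr | hr
  · rw [hh.smul_of_nonneg r hr]
  · rw [show r • x = (-r) • -x by simp, hh.smul_of_nonneg _ (neg_nonneg.2 hr)]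
    nlinarith [hh.add_neg_nonneg x]

theorem map_smul_add_map_neg_smul (hh : IsSublinear h) (r : ℝ) (x : E) :
    h (r • x) + h (-(r • x)) = |r| * (h x + h (-x)) := by
  rcases le_total 0 r with hr | hr
  · rw [← smul_neg, hh.smul_of_nonneg r hr, hh.smul_of_nonneg r hr, abs_of_nonneg hr]
    ring
  · rw [← neg_smul, show r • x = (-r) • -x by simp, hh.smul_of_nonneg _ (neg_nonneg.2 hr),
      hh.smul_of_nonneg _ (neg_nonneg.2 hr), abs_of_nonpos hr]
    ring

theorem map_sum_smul_le {ι : Type*} [Fintype ι] (hh : IsSublinear h) (v : ι → E) {t : ι → ℝ}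
    (ht : ∀ i, t i ∈ Icc (0 : ℝ) 1) : h (∑ i, t i • v i) ≤ ∑ i, |h (v i)| := by
  refine (Finset.le_sum_of_subadditive h hh.map_zero.le hh.add_le _ _).trans
    (Finset.sum_le_sum fun i _ => ?_)
  rw [hh.smul_of_nonneg _ (ht i).1]
  calc t i * h (v i) ≤ t i * |h (v i)| := mul_le_mul_of_nonneg_left (le_abs_self _) (ht i).1
    _ ≤ |h (v i)| := mul_le_of_le_one_left (abs_nonneg _) (ht i).2

def linearitySpace (hh : IsSublinear h) : Submodule ℝ E where
  carrier := {x | h x + h (-x) ≤ 0}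
  add_mem' {x y} hx hy := by
    have := hh.add_le (-x) (-y)
    rw [← neg_add] at this
    simp only [mem_ofPred_eq] at *
    linarith [hh.add_le x y]
  zero_mem' := by simp [hh.map_zero]
  smul_mem' r x hx := by
    simp only [mem_ofPred_eq, hh.map_smul_add_map_neg_smul] at *
    exact mul_nonpos_of_nonneg_of_nonpos (abs_nonneg r) hx

theorem mem_linearitySpace (hh : IsSublinear h) {x : E} :
    x ∈ hh.linearitySpace ↔ h x + h (-x) ≤ 0 := Iff.rfl

theorem linearitySpace_le {g : E → ℝ} (hh : IsSublinear h) (hg : IsSublinear g)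
    (hgh : ∀ x, g x ≤ h x) : hh.linearitySpace ≤ hg.linearitySpace := fun x hx => by
  rw [mem_linearitySpace] at *
  linarith [hgh x, hgh (-x)]

theorem exists_dual_eq_of_linearitySpace_eq_top (hh : IsSublinear h)
    (htop : hh.linearitySpace = ⊤) : ∃ u : Module.Dual ℝ E, ⇑u = h := by
  have hneg (x : E) : h (-x) = -h x := by
    have := hh.mem_linearitySpace.1 (htop ▸ Submodule.mem_top : x ∈ hh.linearitySpace)
    linarith [hh.add_neg_nonneg x]
  refine ⟨{ toFun := h, map_add' := fun x y => ?_, map_smul' := fun r x => ?_ }, rfl⟩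
  · refine le_antisymm (hh.add_le x y) ?_
    have := hh.add_le (x + y) (-y)
    rw [add_neg_cancel_right, hneg] at this
    linarith
  · rcases le_total 0 r with hr | hr
    · exact hh.smul_of_nonneg r hr x
    · rw [← neg_neg (r • x), hneg, ← neg_smul, hh.smul_of_nonneg _ (neg_nonneg.2 hr)]
      simp

end IsSublinear

open scoped NNReal

noncomputable def derivAtInfty (h : E → ℝ) (a x : E) : ℝ :=
  ⨅ t : ℝ≥0, (h ((t : ℝ) • a + x) - t * h a)

theorem le_derivAtInfty {h : E → ℝ} {a x : E} {c : ℝ}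
    (H : ∀ t : ℝ≥0, c ≤ h ((t : ℝ) • a + x) - t * h a) : c ≤ derivAtInfty h a x :=
  le_ciInf H

namespace IsSublinear

variable {ι : Type*} {h : E → ℝ} {a : E}

theorem neg_map_neg_le (hh : IsSublinear h) (t : ℝ≥0) (x : E) :
    -h (-x) ≤ h ((t : ℝ) • a + x) - t * h a := by
  have := hh.add_le ((t : ℝ) • a + x) (-x)
  rw [add_neg_cancel_right, hh.smul_of_nonneg _ t.coe_nonneg] at this
  linarith

theorem antitone_map_smul_add_sub (hh : IsSublinear h) (x : E) :
    Antitone fun t : ℝ≥0 => h ((t : ℝ) • a + x) - t * h a := by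
  intro t t' htt'
  have := hh.add_le (((t' : ℝ) - t) • a) ((t : ℝ) • a + x)
  rw [← add_assoc, ← add_smul, sub_add_cancel,
    hh.smul_of_nonneg _ (sub_nonneg.2 (NNReal.coe_le_coe.2 htt'))] at this
  dsimp only
  linarith

theorem derivAtInfty_le (hh : IsSublinear h) (t : ℝ≥0) (x : E) :
    derivAtInfty h a x ≤ h ((t : ℝ) • a + x) - t * h a :=
  ciInf_le ⟨-h (-x), forall_mem_range.2 fun t => hh.neg_map_neg_le t x⟩ t

theorem derivAtInfty_le_self (hh : IsSublinear h) (x : E) : derivAtInfty h a x ≤ h x := by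
  simpa using hh.derivAtInfty_le (a := a) 0 x

theorem derivAtInfty_smul_self (hh : IsSublinear h) (s : ℝ) :
    derivAtInfty h a (s • a) = s * h a := by
  refine le_antisymm ?_ (le_derivAtInfty fun t => ?_)
  · have := hh.derivAtInfty_le (a := a) (-s).toNNReal (s • a)
    rw [← add_smul, hh.smul_of_nonneg _ (by rw [Real.coe_toNNReal']; linarith [le_max_left (-s) 0])]
      at this
    linarith
  · have := hh.mul_le_map_smul ((t : ℝ) + s) a
    rw [add_smul] at this
    linarith

theorem isSublinear_derivAtInfty (hh : IsSublinear h) (a : E) :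
    IsSublinear (derivAtInfty h a) where
  add_le x y := le_ciInf_add_ciInf fun t s => by
    have h₁ := hh.derivAtInfty_le (a := a) (t + s) (x + y)
    have h₂ := hh.add_le ((t : ℝ) • a + x) ((s : ℝ) • a + y)
    rw [show ((t : ℝ) • a + x) + ((s : ℝ) • a + y) = ((t : ℝ) + s) • a + (x + y) by
      rw [add_smul]; abel] at h₂
    push_cast at h₁
    linarith
  smul_of_nonneg r hr x := by
    rcases hr.eq_or_lt with rfl | hr
    · simp [derivAtInfty, fun t : ℝ≥0 => hh.smul_of_nonneg (t : ℝ) t.2]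
    · rw [derivAtInfty, derivAtInfty, Real.mul_iInf_of_nonneg hr.le]
      refine (Equiv.iInf_congr (Equiv.mulLeft₀ r.toNNReal (Real.toNNReal_pos.2 hr).ne')
        fun t => ?_).symm
      simp only [Equiv.mulLeft₀_apply, NNReal.coe_mul, Real.coe_toNNReal r hr.le]
      rw [mul_smul, ← smul_add, hh.smul_of_nonneg _ hr.le]
      ring

theorem mem_linearitySpace_derivAtInfty (hh : IsSublinear h) (a : E) :
    a ∈ (hh.isSublinear_derivAtInfty a).linearitySpace := by
  have h₁ := hh.derivAtInfty_smul_self (a := a) 1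
  have h₂ := hh.derivAtInfty_smul_self (a := a) (-1)
  rw [one_smul] at h₁
  rw [neg_one_smul] at h₂
  rw [mem_linearitySpace, h₁, h₂]
  linarith

theorem exists_int_derivAtInfty_eq (hh : IsSublinear h) (Λ : Submodule ℤ E)
    (hZ : ∀ x ∈ Λ, ∃ z : ℤ, h x = z) (ha : a ∈ Λ) {x : E} (hx : x ∈ Λ) :
    ∃ z : ℤ, derivAtInfty h a x = z := by
  set g : ℝ≥0 → ℝ := fun t => h ((t : ℝ) • a + x) - t * h a
  have hg_nat (k : ℕ) : ∃ z : ℤ, g k = z := by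
    obtain ⟨za, hza⟩ := hZ a ha
    obtain ⟨zk, hzk⟩ := hZ (k • a + x) (add_mem (nsmul_mem ha k) hx)
    refine ⟨zk - k * za, ?_⟩
    simp only [g, NNReal.coe_natCast, Nat.cast_smul_eq_nsmul, hzk, hza]
    push_cast
    ring
  obtain ⟨m, ⟨k, hk⟩, hmin⟩ := Int.exists_least_of_bdd (P := fun z : ℤ => ∃ k : ℕ, g k = z)
    ⟨⌈-h (-x)⌉, fun z ⟨k, hk⟩ => Int.ceil_le.2 (hk ▸ hh.neg_map_neg_le _ x)⟩
    (let ⟨z, hz⟩ := hg_nat 0; ⟨z, 0, hz⟩)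
  refine ⟨m, le_antisymm (hk ▸ hh.derivAtInfty_le _ x) (le_derivAtInfty fun t => ?_)⟩
  obtain ⟨z, hz⟩ := hg_nat ⌈t⌉₊
  calc (m : ℝ) ≤ z := by exact_mod_cast hmin z ⟨_, hz⟩
    _ = g ⌈t⌉₊ := hz.symm
    _ ≤ g t := hh.antitone_map_smul_add_sub x (Nat.le_ceil t)

theorem exists_le_subset_linearitySpace (hh : IsSublinear h) {Λ : Submodule ℤ E}
    (hZ : ∀ x ∈ Λ, ∃ z : ℤ, h x = z) (s : Finset E) (hs : (s : Set E) ⊆ Λ) :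
    ∃ (g : E → ℝ) (hg : IsSublinear g), (∀ x, g x ≤ h x) ∧ (∀ x ∈ Λ, ∃ z : ℤ, g x = z) ∧
      (s : Set E) ⊆ hg.linearitySpace := by
  classical
  induction s using Finset.induction_on with
  | empty => exact ⟨h, hh, fun _ => le_rfl, hZ, by simp⟩
  | insert a s _ ih =>
    rw [Finset.coe_insert] at hs ⊢
    rw [insert_subset_iff] at hs
    obtain ⟨g, hg, hgh, hgZ, hgs⟩ := ih hs.2
    have hle (x : E) : derivAtInfty g a x ≤ g x := hg.derivAtInfty_le_self x
    exact ⟨derivAtInfty g a, hg.isSublinear_derivAtInfty a, fun x => (hle x).trans (hgh x),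
      fun x hx => hg.exists_int_derivAtInfty_eq Λ hgZ hs.1 hx,
      insert_subset_iff.2 ⟨hg.mem_linearitySpace_derivAtInfty a,
        fun x hx => hg.linearitySpace_le (hg.isSublinear_derivAtInfty a) hle (hgs hx)⟩⟩

theorem exists_dual_le_eq [Finite ι] (hh : IsSublinear h) (b : Module.Basis ι ℝ E)
    {Λ : Submodule ℤ E} (hb : ∀ i, b i ∈ Λ) (hZ : ∀ x ∈ Λ, ∃ z : ℤ, h x = z) {x₀ : E}
    (hx₀ : x₀ ∈ Λ) :
    ∃ u : Module.Dual ℝ E, (∀ x, u x ≤ h x) ∧ (∀ x ∈ Λ, ∃ z : ℤ, u x = z) ∧ u x₀ = h x₀ := by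
  obtain ⟨g, hg, hgh, hgZ, hgb⟩ := (hh.isSublinear_derivAtInfty x₀).exists_le_subset_linearitySpace
    (fun x hx => hh.exists_int_derivAtInfty_eq Λ hZ hx₀ hx) (finite_range b).toFinset
    (by simpa [range_subset_iff] using hb)
  have htop : hg.linearitySpace = ⊤ := by
    rw [eq_top_iff, ← b.span_eq, Submodule.span_le]
    simpa using hgb
  obtain ⟨u, rfl⟩ := hg.exists_dual_eq_of_linearitySpace_eq_top htop
  have hu (x : E) : u x ≤ h x := (hgh x).trans (hh.derivAtInfty_le_self x)
  refine ⟨u, hu, hgZ, le_antisymm (hu x₀) ?_⟩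
  have := hgh (-x₀)
  rw [map_neg, ← neg_one_smul ℝ x₀, hh.derivAtInfty_smul_self] at this
  linarith

end IsSublinear

theorem Module.Basis.exists_mem_span_int_add_sum_smul {ι : Type*} [Fintype ι]
    (b : Module.Basis ι ℝ E) (a : E) :
    ∃ x ∈ Submodule.span ℤ (range b), ∃ t : ι → ℝ,
      (∀ i, t i ∈ Icc (0 : ℝ) 1) ∧ a = x + ∑ i, t i • b i := by
  refine ⟨∑ i, ⌊b.repr a i⌋ • b i,
    Submodule.sum_mem _ fun i _ => Submodule.smul_mem _ _ (Submodule.subset_span ⟨i, rfl⟩),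
    fun i => Int.fract (b.repr a i), fun i => ⟨Int.fract_nonneg _, (Int.fract_lt_one _).le⟩, ?_⟩
  conv_lhs => rw [← b.sum_repr a]
  rw [← Finset.sum_add_distrib]
  refine Finset.sum_congr rfl fun i _ => ?_
  rw [← Int.cast_smul_eq_zsmul ℝ, ← add_smul, Int.floor_add_fract]

theorem IsSublinear.le_of_le_on_span_int {ι : Type*} [Fintype ι] {P Q : E → ℝ}
    (hP : IsSublinear P) (hQ : IsSublinear Q) (b : Module.Basis ι ℝ E)
    (hle : ∀ x ∈ Submodule.span ℤ (range b), P x ≤ Q x) (a : E) : P a ≤ Q a := by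
  set C := ∑ i, (|P (b i)| + |Q (-b i)|)
  have hmul (m : ℕ) : m * P a ≤ m * Q a + C := by
    obtain ⟨x, hx, t, ht, hxt⟩ := b.exists_mem_span_int_add_sum_smul ((m : ℝ) • a)
    have hP' := hP.add_le x (∑ i, t i • b i)
    have hQ' := hQ.add_le ((m : ℝ) • a) (∑ i, t i • -b i)
    have hx' : (m : ℝ) • a + ∑ i, t i • -b i = x := by
      simp only [smul_neg, Finset.sum_neg_distrib, hxt, add_neg_cancel_right]
    rw [← hxt, hP.smul_of_nonneg _ m.cast_nonneg] at hP'
    rw [hx', hQ.smul_of_nonneg _ m.cast_nonneg] at hQ'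
    have hPt := hP.map_sum_smul_le b ht
    have hQt := hQ.map_sum_smul_le (fun i => -b i) ht
    simp only [C, Finset.sum_add_distrib]
    linarith [hle x hx]
  by_contra! hlt
  obtain ⟨m, hm⟩ := exists_nat_gt (C / (P a - Q a))
  rw [div_lt_iff₀ (sub_pos.2 hlt)] at hm
  linarith [hmul m]

def integralDualBall (N : E → ℝ) (Λ : Set E) : Set (Module.Dual ℝ E) :=
  {u | (∀ x, u x ≤ N x) ∧ ∀ x ∈ Λ, ∃ z : ℤ, u x = z}

theorem finite_integralDualBall {ι : Type*} [Finite ι] (b : Module.Basis ι ℝ E) (N : E → ℝ)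
    {Λ : Set E} (hb : ∀ i, b i ∈ Λ) : (integralDualBall N Λ).Finite := by
  refine Finite.of_finite_image (f := fun (u : Module.Dual ℝ E) i => u (b i)) ?_
    fun u _ v _ huv => b.ext fun i => congrFun huv i
  refine (Finite.pi fun i => (finite_Icc ⌈-N (-b i)⌉ ⌊N (b i)⌋).image ((↑) : ℤ → ℝ)).subset ?_
  rintro _ ⟨u, hu, rfl⟩ i -
  obtain ⟨z, hz⟩ := hu.2 _ (hb i)
  have h₁ := hu.1 (b i)
  have h₂ := hu.1 (-b i)
  rw [map_neg] at h₂
  exact ⟨z, ⟨Int.ceil_le.2 (by linarith), Int.le_floor.2 (hz ▸ h₁)⟩, hz.symm⟩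

theorem isSublinear_finset_sup' (F : Finset (Module.Dual ℝ E)) (hF : F.Nonempty) :
    IsSublinear fun x => F.sup' hF fun u => u x where
  add_le x y := Finset.sup'_le _ _ fun u hu => by
    rw [map_add]
    exact add_le_add (Finset.le_sup' (fun u : Module.Dual ℝ E => u x) hu)
      (Finset.le_sup' (fun u : Module.Dual ℝ E => u y) hu)
  smul_of_nonneg r hr x := by
    rw [Finset.apply_sup'_eq_sup'_comp hF (r * ·) fun _ _ => mul_max_of_nonneg _ _ hr]
    simp

theorem IsSublinear.exists_mem_integralDualBall_le {ι : Type*} [Fintype ι] {N : E → ℝ}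
    (hN : IsSublinear N) (b : Module.Basis ι ℝ E)
    (hZ : ∀ x ∈ Submodule.span ℤ (range b), ∃ z : ℤ, N x = z) (a : E) :
    ∃ u ∈ integralDualBall N (Submodule.span ℤ (range b)), N a ≤ u a := by
  have hb (i : ι) : b i ∈ Submodule.span ℤ (range b) := Submodule.subset_span ⟨i, rfl⟩
  set F := (finite_integralDualBall b N hb).toFinset
  have hsupp (x : E) (hx : x ∈ Submodule.span ℤ (range b)) : ∃ u ∈ F, u x = N x :=
    let ⟨u, hu, hZu, hux⟩ := hN.exists_dual_le_eq b hb hZ hx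
    ⟨u, Finite.mem_toFinset _ |>.2 ⟨hu, hZu⟩, hux⟩
  have hF : F.Nonempty := let ⟨u, hu, _⟩ := hsupp 0 (zero_mem _); ⟨u, hu⟩
  have hle := hN.le_of_le_on_span_int (isSublinear_finset_sup' F hF) b
    (fun x hx => let ⟨u, hu, hux⟩ := hsupp x hx
      hux ▸ Finset.le_sup' (fun u : Module.Dual ℝ E => u x) hu) a
  obtain ⟨u, hu, hua⟩ := Finset.exists_mem_eq_sup' hF fun u : Module.Dual ℝ E => u a
  exact ⟨u, Finite.mem_toFinset _ |>.1 hu, hua ▸ hle⟩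

theorem exists_dual_lt_of_notMem_convexHull {V : Type*} [AddCommGroup V] [Module ℝ V]
    [FiniteDimensional ℝ V] {s : Set V} (hs : s.Finite) {v : V} (hv : v ∉ convexHull ℝ s) :
    ∃ f : Module.Dual ℝ V, ∀ u ∈ s, f u < f v := by
  let φ := (Module.finBasis ℝ V).equivFun
  have hφv : φ v ∉ convexHull ℝ (φ '' s) := by
    rw [← LinearEquiv.coe_coe, ← LinearMap.image_convexHull, LinearEquiv.coe_coe,
      φ.injective.mem_set_image]
    exact hv
  obtain ⟨f, c, hfc, hcf⟩ := geometric_hahn_banach_closed_point (convex_convexHull ℝ _)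
    ((hs.image φ).isCompact_convexHull (𝕜 := ℝ)).isClosed hφv
  exact ⟨f.toLinearMap ∘ₗ φ.toLinearMap,
    fun u hu => (hfc _ (subset_convexHull ℝ _ ⟨u, hu, rfl⟩)).trans hcf⟩

theorem convex_dualBall (N : E → ℝ) : Convex ℝ {u : Module.Dual ℝ E | ∀ a, u a ≤ N a} := by
  simpa only [ofPred_forall] using convex_iInter fun a =>
    convex_halfSpace_le (f := fun u : Module.Dual ℝ E => u a) ⟨fun _ _ => rfl, fun _ _ => rfl⟩ (N a)

end

theorem integer_norm_dual_ball_is_convex_hull_of_integer_functionals_general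
    {E : Type*} [AddCommGroup E] [Module ℝ E]
    {ι : Type*} [Fintype ι] (b : Module.Basis ι ℝ E)
    (Λ : Set E) (hΛ : Λ = (Submodule.span ℤ (Set.range b) : Submodule ℤ E))
    (N : E → ℝ)
    (hhom : ∀ (r : ℝ) (a : E), N (r • a) = |r| * N a)
    (hadd : ∀ a c : E, N (a + c) ≤ N a + N c)
    (hint : ∀ a ∈ Λ, ∃ z : ℤ, N a = z) :
    ∃ F : Finset (Module.Dual ℝ E),
      (∀ u ∈ F, ∀ a ∈ Λ, ∃ z : ℤ, u a = z) ∧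
      {u : Module.Dual ℝ E | ∀ a : E, u a ≤ N a} = convexHull ℝ (F : Set (Module.Dual ℝ E)) := by
  subst hΛ
  have := b.finiteDimensional_of_finite
  have hN : IsSublinear N := ⟨hadd, fun r hr x => by rw [hhom, abs_of_nonneg hr]⟩
  have hL := finite_integralDualBall b N (Λ := Submodule.span ℤ (range b))
    fun i => Submodule.subset_span (mem_range_self i)
  refine ⟨hL.toFinset, fun u hu => (hL.mem_toFinset.1 hu).2, ?_⟩
  rw [hL.coe_toFinset]
  refine Subset.antisymm (fun w hw => ?_) (convexHull_min (fun u hu => hu.1) (convex_dualBall N))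
  by_contra hw'
  obtain ⟨f, hf⟩ := exists_dual_lt_of_notMem_convexHull hL hw'
  set a := (Module.evalEquiv ℝ E).symm f
  have hfa (v : Module.Dual ℝ E) : f v = v a := (Module.apply_evalEquiv_symm_apply ℝ E v f).symm
  obtain ⟨u, hu, hNu⟩ := hN.exists_mem_integralDualBall_le b hint a
  have := hf u hu
  rw [hfa, hfa] at this
  linarith [hw a]

/-- An integer norm on a finite-dimensional real vector space has dual unit ball
equal to the convex hull of finitely many linear functionals taking integer
values on the lattice. -/
theorem integer_norm_dual_ball_is_convex_hull_of_integer_functionals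
    {E : Type*} [AddCommGroup E] [Module ℝ E] [FiniteDimensional ℝ E]
    {ι : Type*} [Fintype ι] (b : Module.Basis ι ℝ E)
    (Λ : Set E) (hΛ : Λ = (Submodule.span ℤ (Set.range b) : Submodule ℤ E))
    (N : E → ℝ)
    (hpos : ∀ a : E, a ≠ 0 → 0 < N a)
    (hhom : ∀ (r : ℝ) (a : E), N (r • a) = |r| * N a)
    (hadd : ∀ a c : E, N (a + c) ≤ N a + N c)
    (hint : ∀ a ∈ Λ, ∃ z : ℤ, N a = z) :
    ∃ F : Finset (Module.Dual ℝ E),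
      (∀ u ∈ F, ∀ a ∈ Λ, ∃ z : ℤ, u a = z) ∧
      {u : Module.Dual ℝ E | ∀ a : E, u a ≤ N a} = convexHull ℝ (F : Set (Module.Dual ℝ E)) :=
  integer_norm_dual_ball_is_convex_hull_of_integer_functionals_general b Λ hΛ N hhom hadd hint
end

section
/- Let u₁, …, u_k be linear functionals on a finite-dimensional real vector space E whose convex hull is the dual unit ball of a norm N (so N(a) = max_i ⟨u_i, a⟩ for all a). Then N takes integer values on a lattice Λ if and only if each u_i that is a vertex of the convex hull takes integer values on Λ — in particular, if every u_i is integer-valued on Λ, then N(Λ) ⊆ ℤ. -/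
/-!
For every `a`, the linear function `φ ↦ φ a` attains its maximum over the polytope
`convexHull ℝ (range u)` at a vertex, so `N a = u i a` for some vertex `u i`; this gives the
implication from integral vertices to integral `N`.

Conversely, a vertex `u i` is exposed: some `a₀ ∈ E` makes `u i` the strict maximizer of
`u j a₀` among the `u j ≠ u i`. Rounding `m • a₀` to the lattice for large `m` yields `y ∈ Λ`
such that `u i` is still the maximum at both `y` and `y + x`, hence
`u i x = N (y + x) - N y ∈ ℤ` for every `x ∈ Λ`.
-/

open Set Filter

section ConvexHullOfFinite

variable {V : Type*} [AddCommGroup V] [Module ℝ V] [FiniteDimensional ℝ V] {s : Set V}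

theorem Set.Finite.exists_dual_lt_of_mem_extremePoints_convexHull (hs : s.Finite) {x : V}
    (hx : x ∈ (convexHull ℝ s).extremePoints ℝ) :
    ∃ φ : Module.Dual ℝ V, ∀ y ∈ s, y ≠ x → φ y < φ x := by
  -- Any norm makes `V` locally convex, so Hahn–Banach separation and Krein–Milman apply.
  let e := (Module.finBasis ℝ V).equivFun
  let _ := NormedAddCommGroup.induced V _ e e.injective
  let _ := NormedSpace.induced ℝ V _ e
  have hx' : x ∉ convexHull ℝ (s \ {x}) := fun h ↦
    ((convex_convexHull ℝ s).mem_extremePoints_iff_mem_sdiff_convexHull_sdiff.1 hx).2 <|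
      convexHull_mono (sdiff_subset_sdiff_left (subset_convexHull ℝ s)) h
  obtain ⟨f, c, hf, hc⟩ := geometric_hahn_banach_closed_point (convex_convexHull ℝ _)
    (hs.sdiff.isCompact_convexHull (𝕜 := ℝ)).isClosed hx'
  exact ⟨f, fun y hy hyx ↦ (hf y (subset_convexHull ℝ _ ⟨hy, hyx⟩)).trans hc⟩

theorem Set.Finite.exists_mem_extremePoints_convexHull_forall_le (hs : s.Finite)
    (hne : s.Nonempty) (φ : Module.Dual ℝ V) :
    ∃ x ∈ (convexHull ℝ s).extremePoints ℝ, ∀ y ∈ s, φ y ≤ φ x := by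
  let e := (Module.finBasis ℝ V).equivFun
  let _ := NormedAddCommGroup.induced V _ e e.injective
  let _ := NormedSpace.induced ℝ V _ e
  set K := convexHull ℝ s
  have hK : IsCompact K := hs.isCompact_convexHull (𝕜 := ℝ)
  let ψ : StrongDual ℝ V := LinearMap.toContinuousLinearMap φ
  have hface : IsExposed ℝ K (ψ.toExposed K) := ContinuousLinearMap.toExposed.isExposed
  obtain ⟨z, hzK, hz⟩ := hK.exists_isMaxOn hne.convexHull ψ.continuous.continuousOn
  obtain ⟨x, hx⟩ := (hface.isCompact hK).extremePoints_nonempty ⟨z, hzK, fun y hy ↦ hz hy⟩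
  exact ⟨x, hface.isExtreme.extremePoints_subset_extremePoints hx,
    fun y hy ↦ hx.1.2 y (subset_convexHull ℝ s hy)⟩

end ConvexHullOfFinite

namespace Module.Basis

variable {E ι : Type*} [AddCommGroup E] [Module ℝ E] [Fintype ι] (b : Basis ι ℝ E)

theorem exists_mem_span_int_abs_sub_le (a : E) :
    ∃ y ∈ Submodule.span ℤ (range b), ∀ f : Module.Dual ℝ E, |f y - f a| ≤ ∑ l, |f (b l)| := by
  refine ⟨∑ l, round (b.repr a l) • b l,
    Submodule.sum_mem _ fun l _ ↦ Submodule.smul_mem _ _ (Submodule.subset_span ⟨l, rfl⟩),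
    fun f ↦ ?_⟩
  have hfa : f a = ∑ l, b.repr a l * f (b l) := by
    conv_lhs => rw [← b.sum_repr a]
    simp only [map_sum, map_smul, smul_eq_mul]
  simp only [hfa, map_sum, map_zsmul, zsmul_eq_mul, ← Finset.sum_sub_distrib, ← sub_mul]
  refine (Finset.abs_sum_le_sum_abs _ _).trans (Finset.sum_le_sum fun l _ ↦ ?_)
  rw [abs_mul]
  refine mul_le_of_le_one_left (abs_nonneg _) ?_
  rw [abs_sub_comm]
  linarith [abs_sub_round (b.repr a l)]

theorem exists_mem_span_int_forall_lt {J : Type*} [Finite J] (f : J → Module.Dual ℝ E) {a : E}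
    (ha : ∀ j, 0 < f j a) (c : J → ℝ) :
    ∃ y ∈ Submodule.span ℤ (range b), ∀ j, c j < f j y := by
  choose y hyΛ hy using fun m : ℕ ↦ b.exists_mem_span_int_abs_sub_le ((m : ℝ) • a)
  have hlarge : ∀ j, ∀ᶠ m : ℕ in atTop, c j < f j (y m) := fun j ↦ by
    have htend : Tendsto (fun m : ℕ ↦ m * f j a - ∑ l, |f j (b l)|) atTop atTop :=
      tendsto_atTop_add_const_right _ _ (tendsto_natCast_atTop_atTop.atTop_mul_const (ha j))
    filter_upwards [htend.eventually_gt_atTop (c j)] with m hm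
    have := (abs_le.1 (hy m (f j))).1
    rw [map_smul, smul_eq_mul] at this
    linarith
  obtain ⟨m, hm⟩ := (eventually_all.2 hlarge).exists
  exact ⟨y m, hyΛ m, hm⟩

theorem exists_mem_span_int_forall_apply_le {J : Type*} [Finite J] (u : J → Module.Dual ℝ E)
    {i : J} (hi : u i ∈ (convexHull ℝ (range u)).extremePoints ℝ) (x : E) :
    ∃ y ∈ Submodule.span ℤ (range b), ∀ j, u j y ≤ u i y ∧ u j (y + x) ≤ u i (y + x) := by
  have := Module.Finite.of_basis b
  obtain ⟨φ, hφ⟩ := (finite_range u).exists_dual_lt_of_mem_extremePoints_convexHull hi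
  obtain ⟨y, hy, hlt⟩ := b.exists_mem_span_int_forall_lt (J := {j // u j ≠ u i})
    (fun j ↦ u i - u j) (a := (Module.evalEquiv ℝ E).symm φ)
    (fun j ↦ by simpa using hφ _ (mem_range_self j.1) j.2) (fun j ↦ |(u i - u j) x|)
  refine ⟨y, hy, fun j ↦ ?_⟩
  by_cases hj : u j = u i
  · simp [hj]
  · have := hlt ⟨j, hj⟩
    simp only [LinearMap.sub_apply] at this
    rw [map_add, map_add]
    constructor <;> linarith [neg_abs_le (u i x - u j x), abs_nonneg (u i x - u j x)]

end Module.Basis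

theorem max_functional_norm_integer_iff_vertices_integer_general
    {E : Type*} [AddCommGroup E] [Module ℝ E]
    {ι : Type*} [Fintype ι] (b : Module.Basis ι ℝ E)
    (Λ : Set E) (hΛ : Λ = (Submodule.span ℤ (Set.range b) : Submodule ℤ E))
    {k : ℕ} (u : Fin (k + 1) → Module.Dual ℝ E)
    (N : E → ℝ)
    (hN : ∀ a : E, N a = Finset.univ.sup' Finset.univ_nonempty (fun i => u i a)) :
    ((∀ a ∈ Λ, ∃ z : ℤ, N a = z) ↔
      (∀ i, u i ∈ Set.extremePoints ℝ (convexHull ℝ (Set.range u)) →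
        ∀ a ∈ Λ, ∃ z : ℤ, u i a = z)) ∧
    ((∀ i, ∀ a ∈ Λ, ∃ z : ℤ, u i a = z) → ∀ a ∈ Λ, ∃ z : ℤ, N a = z) := by
  subst hΛ
  have hN_eq (a : E) (i) (hi : ∀ j, u j a ≤ u i a) : N a = u i a := by
    rw [hN]
    exact le_antisymm (Finset.sup'_le _ _ fun j _ ↦ hi j) (Finset.le_sup' (u · a) (Finset.mem_univ i))
  have hN_vertex (a : E) :
      ∃ i, u i ∈ (convexHull ℝ (range u)).extremePoints ℝ ∧ N a = u i a := by
    have := Module.Finite.of_basis b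
    obtain ⟨φ, hφ, hmax⟩ := (finite_range u).exists_mem_extremePoints_convexHull_forall_le
      (range_nonempty u) (Module.Dual.eval ℝ E a)
    obtain ⟨i, rfl⟩ := extremePoints_convexHull_subset hφ
    exact ⟨i, hφ, hN_eq a i fun j ↦ hmax _ (mem_range_self j)⟩
  refine ⟨⟨fun hint i hi x hx ↦ ?_, fun hvert a ha ↦ ?_⟩, fun hall a ha ↦ ?_⟩
  · obtain ⟨y, hy, hmax⟩ := b.exists_mem_span_int_forall_apply_le u hi x
    obtain ⟨z₁, hz₁⟩ := hint y hy
    obtain ⟨z₂, hz₂⟩ := hint (y + x) (add_mem hy hx)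
    rw [hN_eq y i fun j ↦ (hmax j).1] at hz₁
    rw [hN_eq (y + x) i fun j ↦ (hmax j).2, map_add] at hz₂
    exact ⟨z₂ - z₁, by push_cast; linarith⟩
  · obtain ⟨i, hi, hNa⟩ := hN_vertex a
    exact hNa ▸ hvert i hi a ha
  · obtain ⟨i, -, hNa⟩ := hN_vertex a
    exact hNa ▸ hall i a ha

/-- For a norm given as a max of finitely many linear functionals, the norm takes
integer values on a full-rank lattice iff every functional which is a vertex
(extreme point) of the dual unit ball (the convex hull of the functionals) is
integer-valued on the lattice; in particular, if all functionals are
integer-valued, the norm is. -/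
theorem max_functional_norm_integer_iff_vertices_integer
    {E : Type*} [AddCommGroup E] [Module ℝ E] [FiniteDimensional ℝ E]
    {ι : Type*} [Fintype ι] (b : Module.Basis ι ℝ E)
    (Λ : Set E) (hΛ : Λ = (Submodule.span ℤ (Set.range b) : Submodule ℤ E))
    {k : ℕ} (u : Fin (k + 1) → Module.Dual ℝ E)
    (N : E → ℝ)
    (hN : ∀ a : E, N a = Finset.univ.sup' Finset.univ_nonempty (fun i => u i a))
    (hnorm : (∀ a : E, a ≠ 0 → 0 < N a) ∧ ∀ a : E, N (-a) = N a) :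
    ((∀ a ∈ Λ, ∃ z : ℤ, N a = z) ↔
      (∀ i, u i ∈ Set.extremePoints ℝ (convexHull ℝ (Set.range u)) →
        ∀ a ∈ Λ, ∃ z : ℤ, u i a = z)) ∧
    ((∀ i, ∀ a ∈ Λ, ∃ z : ℤ, u i a = z) → ∀ a ∈ Λ, ∃ z : ℤ, N a = z) :=
  max_functional_norm_integer_iff_vertices_integer_general b Λ hΛ u N hN
end

section
/- If every vertex u_i of the dual unit ball of an integer norm N on ℝⁿ (relative to ℤⁿ) has all coordinates even, then N(a) is even for every a ∈ ℤⁿ; conversely, if N takes only even values on ℤⁿ and N(a) = max_i ⟨u_i, a⟩ with u_i ∈ ℤⁿ vertices of the dual ball, then each u_i ∈ 2ℤⁿ. -/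
/-!
If every `uᵢ` is even then so is each `⟨uᵢ, a⟩`, hence so is their maximum. Conversely, the
extreme vertex `uᵢ` is the unique maximiser on an open cone, which contains an integer point `b`.
For an even `m` large enough, `uᵢ` is still the unique maximiser at `m • b + e_c`, where its value
is `m ⟨uᵢ, b⟩ + uᵢ c ≡ uᵢ c (mod 2)`.
-/

open Finset Matrix

lemma dvd_sup'_of_forall_dvd {ι α : Type*} [Dvd α] [LinearOrder α] {s : Finset ι}
    (H : s.Nonempty) {f : ι → α} {d : α} (h : ∀ i ∈ s, d ∣ f i) : d ∣ s.sup' H f := by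
  obtain ⟨i, hi, hsup⟩ := exists_mem_eq_sup' H f
  exact hsup ▸ h i hi

/-- `round (T • a) / T` lies within `1 / (2 T)` of `a` in the sup norm, hence in a ball around `a`
inside `S` once `T` is large. -/
lemma exists_intCast_mem_of_isOpen_of_smul_mem {κ : Type*} [Fintype κ] {S : Set (κ → ℝ)}
    (hS : IsOpen S) (hcone : ∀ t : ℝ, 0 < t → ∀ x ∈ S, t • x ∈ S) (hne : S.Nonempty) :
    ∃ b : κ → ℤ, ((↑) ∘ b : κ → ℝ) ∈ S := by
  obtain ⟨a, ha⟩ := hne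
  obtain ⟨ε, hε, hball⟩ := Metric.isOpen_iff.mp hS a ha
  obtain ⟨T, hT⟩ := exists_nat_gt ε⁻¹
  have hT0 : (0 : ℝ) < T := (inv_pos.mpr hε).trans hT
  set b : κ → ℤ := fun c => round (T * a c)
  have hround : ‖((↑) ∘ b : κ → ℝ) - (T : ℝ) • a‖ ≤ 1 / 2 :=
    pi_norm_le_iff_of_nonneg (by norm_num) |>.mpr fun c => by
      simpa [b, Real.norm_eq_abs, abs_sub_comm] using abs_sub_round (T * a c)
  have hmem : (T : ℝ)⁻¹ • ((↑) ∘ b : κ → ℝ) ∈ S := by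
    refine hball ?_
    rw [Metric.mem_ball, dist_eq_norm]
    calc ‖(T : ℝ)⁻¹ • ((↑) ∘ b : κ → ℝ) - a‖
        = (T : ℝ)⁻¹ * ‖((↑) ∘ b : κ → ℝ) - (T : ℝ) • a‖ := by
          rw [← norm_smul_of_nonneg (inv_nonneg.mpr hT0.le), smul_sub, smul_smul,
            inv_mul_cancel₀ hT0.ne', one_smul]
      _ ≤ (T : ℝ)⁻¹ * (1 / 2) := by gcongr
      _ < ε := by linarith [inv_pos.mpr hT0, inv_lt_of_inv_lt₀ hε hT]
  refine ⟨b, ?_⟩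
  simpa [smul_smul, hT0.ne'] using hcone T hT0 _ hmem

lemma exists_int_dotProduct_lt_of_real {ι κ : Type*} [Finite ι] [Fintype κ] {u : ι → κ → ℤ}
    {i : ι} (h : ∃ a : κ → ℝ, ∀ j, j ≠ i → ((↑) ∘ u j) ⬝ᵥ a < ((↑) ∘ u i) ⬝ᵥ a) :
    ∃ b : κ → ℤ, ∀ j, j ≠ i → u j ⬝ᵥ b < u i ⬝ᵥ b := by
  set S : Set (κ → ℝ) := {a | ∀ j, j ≠ i → ((↑) ∘ u j) ⬝ᵥ a < ((↑) ∘ u i) ⬝ᵥ a}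
  have hS : IsOpen S := by
    simp only [S, Set.ofPred_forall]
    exact isOpen_iInter_of_finite fun j => isOpen_iInter_of_finite fun _ =>
      isOpen_lt (continuous_const.dotProduct continuous_id)
        (continuous_const.dotProduct continuous_id)
  have hcone : ∀ t : ℝ, 0 < t → ∀ x ∈ S, t • x ∈ S := fun t ht x hx j hj => by
    simpa only [dotProduct_smul, smul_eq_mul, mul_lt_mul_iff_right₀ ht] using hx j hj
  obtain ⟨b, hb⟩ := exists_intCast_mem_of_isOpen_of_smul_mem hS hcone h
  refine ⟨b, fun j hj => ?_⟩
  have hcast (v : κ → ℤ) : ((v ⬝ᵥ b : ℤ) : ℝ) = ((↑) ∘ v) ⬝ᵥ ((↑) ∘ b) :=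
    (Int.castRingHom ℝ).map_dotProduct v b
  have hreal : ((u j ⬝ᵥ b : ℤ) : ℝ) < u i ⬝ᵥ b := by rw [hcast, hcast]; exact hb j hj
  exact_mod_cast hreal

lemma dotProduct_smul_add_single {κ : Type*} [Fintype κ] [DecidableEq κ] (v b : κ → ℤ) (m : ℤ)
    (c : κ) : v ⬝ᵥ (m • b + Pi.single c 1) = m * (v ⬝ᵥ b) + v c := by
  rw [dotProduct_add, dotProduct_smul, dotProduct_single, mul_one, smul_eq_mul]

lemma exists_sup'_dotProduct_eq_two_mul_add {ι κ : Type*} [Fintype ι] [Nonempty ι] [Fintype κ]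
    {u : ι → κ → ℤ} {i : ι} {b : κ → ℤ} (hb : ∀ j, j ≠ i → u j ⬝ᵥ b < u i ⬝ᵥ b) (c : κ) :
    ∃ a : κ → ℤ, ∃ m : ℤ, univ.sup' univ_nonempty (fun j => u j ⬝ᵥ a) = 2 * m + u i c := by
  classical
  set M := ∑ j, |u j c - u i c|
  set a := (2 * (M + 1)) • b + Pi.single c 1
  have hle : ∀ j, u j ⬝ᵥ a ≤ u i ⬝ᵥ a := fun j => by
    rcases eq_or_ne j i with rfl | hj
    · exact le_rfl
    have hM : u j c - u i c ≤ M :=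
      (le_abs_self _).trans (single_le_sum (fun j _ => abs_nonneg (u j c - u i c)) (mem_univ j))
    have hM0 : 0 ≤ M := sum_nonneg fun j _ => abs_nonneg _
    rw [dotProduct_smul_add_single, dotProduct_smul_add_single]
    nlinarith [hb j hj]
  refine ⟨a, (M + 1) * (u i ⬝ᵥ b), ?_⟩
  rw [le_antisymm (sup'_le _ _ fun j _ => hle j) (le_sup' (fun j => u j ⬝ᵥ a) (mem_univ i)),
    dotProduct_smul_add_single, mul_assoc]

theorem even_vertices_iff_even_norm_general
    {n k : ℕ} (u : Fin (k + 1) → Fin n → ℤ)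
    (hext : ∀ i : Fin (k + 1), ∃ a : Fin n → ℝ,
      ∀ j : Fin (k + 1), j ≠ i → ∑ c, (u j c : ℝ) * a c < ∑ c, (u i c : ℝ) * a c) :
    (∀ i : Fin (k + 1), ∀ c : Fin n, (2 : ℤ) ∣ u i c) ↔
      (∀ a : Fin n → ℤ,
        (2 : ℤ) ∣ Finset.univ.sup' Finset.univ_nonempty (fun i => ∑ c, u i c * a c)) := by
  constructor
  · intro h a
    exact dvd_sup'_of_forall_dvd _ fun i _ => dvd_sum fun c _ => (h i c).mul_right _
  · intro heven i c
    obtain ⟨b, hb⟩ := exists_int_dotProduct_lt_of_real (hext i)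
    obtain ⟨a, m, ha⟩ := exists_sup'_dotProduct_eq_two_mul_add hb c
    exact (Int.dvd_add_right (dvd_mul_right 2 m)).mp (ha ▸ heven a)

/-- For a norm `N(a) = maxᵢ ⟨uᵢ, a⟩` on `ℝⁿ` whose defining integer vectors
`uᵢ` are exactly the vertices of the dual unit ball (each is extreme), all
coordinates of all `uᵢ` are even iff `N` takes only even values on `ℤⁿ`. -/
theorem even_vertices_iff_even_norm
    {n k : ℕ} (u : Fin (k + 1) → Fin n → ℤ)
    (N : (Fin n → ℝ) → ℝ)
    (hN : ∀ a : Fin n → ℝ,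
      N a = Finset.univ.sup' Finset.univ_nonempty (fun i => ∑ c, (u i c : ℝ) * a c))
    (hnorm : ∀ a : Fin n → ℝ, a ≠ 0 → 0 < N a)
    (hext : ∀ i : Fin (k + 1), ∃ a : Fin n → ℝ,
      ∀ j : Fin (k + 1), j ≠ i → ∑ c, (u j c : ℝ) * a c < ∑ c, (u i c : ℝ) * a c) :
    (∀ i : Fin (k + 1), ∀ c : Fin n, (2 : ℤ) ∣ u i c) ↔
      (∀ a : Fin n → ℤ,
        (2 : ℤ) ∣ Finset.univ.sup' Finset.univ_nonempty (fun i => ∑ c, u i c * a c)) :=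
  even_vertices_iff_even_norm_general u hext
end
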